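/- arXiv:2409.17218 — 2 statements merged into one kernel-verified Lean document; each statement's English description precedes it below -/
import Mathlib

section
/- Fix integers n≥2 and even m≥2, and let g_A,g_B,X∈S_{mn} be the standard reflected-entropy boundary elements. In S_{2mn}, acting independently on two copies of {1,…,mn}, set g̃_A=g_A⊕g_A, g̃_B=g_B⊕g_B, X̃=X⊕X, and let q̃_A=q_{X̃}(g̃_A), q̃_B=q_{X̃}(g̃_B)∈P_{4n} be the coarse grainings by X̃ (the first 2n positions coming from the first copy and the last 2n from the second). Then for every q∈P_{4n}: d(q̃_A,q)+d(q,q̃_B)≥d(q̃_A,q̃_B)+2(1−δ_{#₁⁽¹⁾(q),0})+2(1−δ_{#₁⁽²⁾(q),0})+2δ_{q∨τ,𝟙}, where #₁⁽¹⁾(q) and #₁⁽²⁾(q) count the singlets of q among the first and last 2n positions respectively, τ∈P_{4n} is the two-block partition {{1,…,2n},{2n+1,…,4n}}, and δ_{q∨τ,𝟙}=1 if and only if q∨τ is the one-block partition of {1,…,4n}. -/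
open scoped Classical

noncomputable section

namespace RTN

/-! ## Set partitions -/

/-- Number of blocks of a set partition (as an integer). -/
def nb {α : Type*} (p : Setoid α) : ℤ := Nat.card (Quotient p)

/-- The partition distance `d(p,q) = #(p) + #(q) - 2 #(p ⊔ q)`. -/
def pdist {α : Type*} (p q : Setoid α) : ℤ := nb p + nb q - 2 * nb (p ⊔ q)

lemma pdist_comm {α : Type*} (p q : Setoid α) : pdist p q = pdist q p := by
  unfold pdist
  rw [sup_comm p q]
  ring

/-- `k` is a singlet (block of size one) of the partition `p`. -/
def IsSinglet {α : Type*} (p : Setoid α) (k : α) : Prop := ∀ y, p.r k y → y = k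

/-- The number of singlets `#₁(p)` of a partition. -/
def nS {α : Type*} (p : Setoid α) : ℤ := Nat.card {k : α // IsSinglet p k}

/-- The singlet distance `d₁(s₁,s₂) = #₁(s₁) + #₁(s₂) - 2 #₁(s₁ ⊔ s₂)`. -/
def sdist {α : Type*} (s₁ s₂ : Setoid α) : ℤ := nS s₁ + nS s₂ - 2 * nS (s₁ ⊔ s₂)

/-- The singlet pattern `s(p)`: the coarsest partition whose singlets are exactly
those of `p` (all non-singlet elements lie in one block). -/
def spat {α : Type*} (p : Setoid α) : Setoid α where
  r x y := x = y ∨ (¬ IsSinglet p x ∧ ¬ IsSinglet p y)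
  iseqv := by
    refine ⟨fun x => Or.inl rfl, ?_, ?_⟩
    · intro x y h
      rcases h with rfl | ⟨hx, hy⟩
      · exact Or.inl rfl
      · exact Or.inr ⟨hy, hx⟩
    · intro x y z h1 h2
      rcases h1 with rfl | ⟨hx, hy⟩
      · exact h2
      · rcases h2 with rfl | ⟨_, hz⟩
        · exact Or.inr ⟨hx, hy⟩
        · exact Or.inr ⟨hx, hz⟩

/-- The bit `b^k(p)`: `0` if `p` has a singlet at `k`, else `1`. -/
def bbit {α : Type*} (p : Setoid α) (k : α) : ℤ := if IsSinglet p k then 0 else 1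

/-- The size of the block of `p` containing `x`. -/
def blockSize {α : Type*} (p : Setoid α) (x : α) : ℕ := Nat.card {y : α // p.r x y}

noncomputable instance {α : Type*} [Finite α] (s : Setoid α) : Fintype (Quotient s) :=
  Fintype.ofFinite _

/-! ## Permutations -/

/-- The partition of `α` into orbits (cycles) of a permutation. -/
def orbitSetoid {α : Type*} (g : Equiv.Perm α) : Setoid α where
  r x y := ∃ k : ℤ, (g ^ k) x = y
  iseqv := by
    refine ⟨fun x => ⟨0, by simp⟩, ?_, ?_⟩
    · rintro x y ⟨k, rfl⟩
      exact ⟨-k, by simp [← Equiv.Perm.mul_apply, ← zpow_add]⟩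
    · rintro x y z ⟨k, rfl⟩ ⟨l, rfl⟩
      exact ⟨l + k, by rw [zpow_add, Equiv.Perm.mul_apply]⟩

/-- The number of cycles `#(g)` of a permutation (fixed points included). -/
def ncyc {α : Type*} (g : Equiv.Perm α) : ℤ := nb (orbitSetoid g)

/-- The Cayley distance `d(g,h) = N - #(g h⁻¹)`. -/
def cayley {α : Type*} [Fintype α] (g h : Equiv.Perm α) : ℤ :=
  (Fintype.card α : ℤ) - ncyc (g * h⁻¹)

lemma orbitSetoid_inv {α : Type*} (g : Equiv.Perm α) : orbitSetoid g⁻¹ = orbitSetoid g := by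
  apply Setoid.ext
  intro x y
  constructor
  · rintro ⟨k, hk⟩
    exact ⟨-k, by rw [← inv_zpow']; exact hk⟩
  · rintro ⟨k, hk⟩
    exact ⟨-k, by rw [inv_zpow', neg_neg]; exact hk⟩

lemma cayley_comm {α : Type*} [Fintype α] (g h : Equiv.Perm α) : cayley g h = cayley h g := by
  unfold cayley ncyc
  rw [show h * g⁻¹ = (g * h⁻¹)⁻¹ by rw [mul_inv_rev, inv_inv], orbitSetoid_inv]

/-- Coarse graining of a partition `p` by the blocks of `P(g₀)`: the partition of the set
of blocks of `P(g₀)` induced by `p ⊔ P(g₀)`. -/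
def coarse {α : Type*} (g₀ : Equiv.Perm α) (p : Setoid α) :
    Setoid (Quotient (orbitSetoid g₀)) where
  r u v := ∃ x y : α, Quotient.mk (orbitSetoid g₀) x = u ∧ Quotient.mk (orbitSetoid g₀) y = v ∧
    (p ⊔ orbitSetoid g₀).r x y
  iseqv := by
    refine ⟨?_, ?_, ?_⟩
    · intro u
      obtain ⟨x, rfl⟩ := Quotient.exists_rep u
      exact ⟨x, x, rfl, rfl, (p ⊔ orbitSetoid g₀).iseqv.refl x⟩
    · rintro u v ⟨x, y, hx, hy, hxy⟩
      exact ⟨y, x, hy, hx, (p ⊔ orbitSetoid g₀).iseqv.symm hxy⟩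
    · rintro u v w ⟨x, y, hx, hy, hxy⟩ ⟨y', z, hy', hz, hyz⟩
      refine ⟨x, z, hx, hz, ?_⟩
      have h1 : (orbitSetoid g₀).r y y' := Quotient.exact (hy.trans hy'.symm)
      have h2 : (p ⊔ orbitSetoid g₀).r y y' :=
        (le_sup_right : orbitSetoid g₀ ≤ p ⊔ orbitSetoid g₀) h1
      exact (p ⊔ orbitSetoid g₀).iseqv.trans hxy
        ((p ⊔ orbitSetoid g₀).iseqv.trans h2 hyz)

/-- The coarse graining `q_{g₀}(g) ∈ P_{#(g₀)}` of a permutation `g`. -/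
def qc {α : Type*} (g₀ g : Equiv.Perm α) : Setoid (Quotient (orbitSetoid g₀)) :=
  coarse g₀ (orbitSetoid g)

/-! ## Standard reflected-entropy boundary elements -/

/-- `g_B`, the product of `n` disjoint `m`-cycles `(k,ℓ) ↦ (k,ℓ+1)`. -/
def gB (n m : ℕ) : Equiv.Perm (Fin n × Fin m) :=
  Equiv.prodCongr (Equiv.refl (Fin n)) (finRotate m)

/-- `γ`, cyclically shifting `k ↦ k+1` on the elements with `ℓ` in the lower half,
fixing the rest. -/
def gamma (n m : ℕ) : Equiv.Perm (Fin n × Fin m) where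
  toFun x := if m / 2 ≤ (x.2 : ℕ) then (finRotate n x.1, x.2) else x
  invFun x := if m / 2 ≤ (x.2 : ℕ) then ((finRotate n).symm x.1, x.2) else x
  left_inv := by
    intro x
    by_cases h : m / 2 ≤ (x.2 : ℕ) <;> simp [h, -finRotate_apply, -finRotate_symm_apply]
  right_inv := by
    intro x
    by_cases h : m / 2 ≤ (x.2 : ℕ) <;> simp [h, -finRotate_apply, -finRotate_symm_apply]

/-- `g_A = γ⁻¹ g_B γ`. -/
def gA (n m : ℕ) : Equiv.Perm (Fin n × Fin m) :=
  (gamma n m)⁻¹ * gB n m * gamma n m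

/-- For even `m`, `Fin m` splits into an upper and a lower half. -/
def halfEquiv (m : ℕ) (hm : m % 2 = 0) : Fin 2 × Fin (m / 2) ≃ Fin m :=
  finProdFinEquiv.trans (finCongr (by omega))

/-- `X`, the product of the `2n` disjoint `(m/2)`-cycles cyclically permuting the
upper and the lower half of each block `k`. -/
def Xel (n m : ℕ) (hm : m % 2 = 0) : Equiv.Perm (Fin n × Fin m) :=
  Equiv.prodCongr (Equiv.refl (Fin n))
    ((halfEquiv m hm).permCongr
      (Equiv.prodCongr (Equiv.refl (Fin 2)) (finRotate (m / 2))))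

/-- The set of blocks of `P(X)`; it has `2n` elements. -/
abbrev BX (n m : ℕ) (hm : m % 2 = 0) := Quotient (orbitSetoid (Xel n m hm))

/-- `q_A = q_X(g_A) ∈ P_{2n}`. -/
def qAel (n m : ℕ) (hm : m % 2 = 0) : Setoid (BX n m hm) :=
  qc (Xel n m hm) (gA n m)

/-- `q_B = q_X(g_B) ∈ P_{2n}`. -/
def qBel (n m : ℕ) (hm : m % 2 = 0) : Setoid (BX n m hm) :=
  qc (Xel n m hm) (gB n m)

/-! ## Doubled elements (two copies) -/

/-- Two copies of the index set `{1,…,mn}`. -/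
abbrev DIdx (n m : ℕ) := (Fin n × Fin m) ⊕ (Fin n × Fin m)

/-- `g̃_A = g_A ⊕ g_A`. -/
def gAt (n m : ℕ) : Equiv.Perm (DIdx n m) := Equiv.sumCongr (gA n m) (gA n m)

/-- `g̃_B = g_B ⊕ g_B`. -/
def gBt (n m : ℕ) : Equiv.Perm (DIdx n m) := Equiv.sumCongr (gB n m) (gB n m)

/-- `X̃ = X ⊕ X`. -/
def Xt (n m : ℕ) (hm : m % 2 = 0) : Equiv.Perm (DIdx n m) :=
  Equiv.sumCongr (Xel n m hm) (Xel n m hm)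

/-- The set of blocks of `P(X̃)`; it has `4n` elements. -/
abbrev BXt (n m : ℕ) (hm : m % 2 = 0) := Quotient (orbitSetoid (Xt n m hm))

/-- `q̃_A = q_{X̃}(g̃_A) ∈ P_{4n}`. -/
def qAt (n m : ℕ) (hm : m % 2 = 0) : Setoid (BXt n m hm) :=
  qc (Xt n m hm) (gAt n m)

/-- `q̃_B = q_{X̃}(g̃_B) ∈ P_{4n}`. -/
def qBt (n m : ℕ) (hm : m % 2 = 0) : Setoid (BXt n m hm) :=
  qc (Xt n m hm) (gBt n m)

/-- A block of `P(X̃)` lies in the first copy. -/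
def inCopy1 {n m : ℕ} {hm : m % 2 = 0} (u : BXt n m hm) : Prop :=
  ∃ x, Quotient.mk (orbitSetoid (Xt n m hm)) (Sum.inl x) = u

/-- `#₁⁽¹⁾(q)`: the number of singlets of `q` among the first-copy positions. -/
def nS1 {n m : ℕ} {hm : m % 2 = 0} (q : Setoid (BXt n m hm)) : ℤ :=
  Nat.card {u : BXt n m hm // IsSinglet q u ∧ inCopy1 u}

/-- `#₁⁽²⁾(q)`: the number of singlets of `q` among the second-copy positions. -/
def nS2 {n m : ℕ} {hm : m % 2 = 0} (q : Setoid (BXt n m hm)) : ℤ :=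
  Nat.card {u : BXt n m hm // IsSinglet q u ∧ ¬ inCopy1 u}

/-- `τ ∈ P_{4n}`, the two-block partition separating the two copies. -/
def tau (n m : ℕ) (hm : m % 2 = 0) : Setoid (BXt n m hm) where
  r u v := inCopy1 u ↔ inCopy1 v
  iseqv := ⟨fun _ => Iff.rfl, Iff.symm, Iff.trans⟩

/-! ## Graphs, cuts and optimization programs -/

variable {V : Type*}

/-- Sum of an edge function along (the edge list of) a walk, with multiplicity. -/
def wkSum {β : Type*} [AddCommMonoid β] {G : SimpleGraph V} {x y : V}
    (f : Sym2 V → β) (L : G.Walk x y) : β :=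
  (L.edges.map f).sum

variable [Fintype V]

/-- Sum of an edge weight function over a set of edges. -/
def wsum (f : Sym2 V → ℝ) (S : Set (Sym2 V)) : ℝ :=
  ∑ e ∈ Finset.univ.filter (· ∈ S), f e

/-- The cut surface `μ(r)`: edges of `G` with one endpoint in `r`, the other outside. -/
def mu (G : SimpleGraph V) (r : Set V) : Set (Sym2 V) :=
  {e | e ∈ G.edgeSet ∧ ∃ x y, e = s(x, y) ∧ x ∈ r ∧ y ∉ r}

/-- `μ(r₁:r₂)`: edges of `G` with an endpoint in `r₁` and an endpoint in `r₂`. -/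
def mu2 (G : SimpleGraph V) (r₁ r₂ : Set V) : Set (Sym2 V) :=
  {e | e ∈ G.edgeSet ∧ ∃ x y, e = s(x, y) ∧ x ∈ r₁ ∧ y ∈ r₂}

/-- `r` is a cut for `X : Y`. -/
def IsCut (X Y r : Set V) : Prop := X ⊆ r ∧ Y ⊆ rᶜ

/-- The minimal cut area `𝒜(X:Y)`. -/
def minCut (G : SimpleGraph V) (w : Sym2 V → ℝ) (X Y : Set V) : ℝ :=
  sInf {a | ∃ r : Set V, IsCut X Y r ∧ a = wsum w (mu G r)}

/-- `(α,β,γ)` is a triway cut for `(A,B,C)`. -/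
def IsTriway (A B C α β γ : Set V) : Prop :=
  α ∪ β ∪ γ = Set.univ ∧ Disjoint α β ∧ Disjoint β γ ∧ Disjoint α γ ∧
    A ⊆ α ∧ B ⊆ β ∧ C ⊆ γ

/-- The area of a triway cut with tensions `(t_{A:B}, t_{B:C}, t_{C:A})`. -/
def triArea (G : SimpleGraph V) (w : Sym2 V → ℝ) (tAB tBC tCA : ℝ)
    (α β γ : Set V) : ℝ :=
  tAB * wsum w (mu2 G α β) + tBC * wsum w (mu2 G β γ) + tCA * wsum w (mu2 G γ α)

/-- The minimal triway cut area `𝒜_t(A:B:C)`. -/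
def triCut (G : SimpleGraph V) (w : Sym2 V → ℝ) (tAB tBC tCA : ℝ)
    (A B C : Set V) : ℝ :=
  sInf {a | ∃ α β γ : Set V, IsTriway A B C α β γ ∧ a = triArea G w tAB tBC tCA α β γ}

/-- Boundary data: `∂ = A ⊔ B ⊔ C` (pairwise disjoint). -/
def Bdy (A B C : Set V) : Prop := Disjoint A B ∧ Disjoint A C ∧ Disjoint B C

/-! ### The permutation optimization `R` -/

/-- The symmetric edge function induced by the Cayley distance of a vertex
configuration of permutations. -/
def permE {ι : Type*} [Fintype ι] (g : V → Equiv.Perm ι) : Sym2 V → ℝ :=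
  Sym2.lift ⟨fun x y => (cayley (g x) (g y) : ℝ),
    fun x y => congrArg Int.cast (cayley_comm (g x) (g y))⟩

/-- The free energy `R(g) = Σ_e w(e) d(g(x),g(y))`. -/
def Renergy {ι : Type*} [Fintype ι] (G : SimpleGraph V) (w : Sym2 V → ℝ)
    (g : V → Equiv.Perm ι) : ℝ :=
  wsum (fun e => w e * permE g e) G.edgeSet

/-- The optimal value `R` of the permutation optimization. -/
def Rval {ι : Type*} [Fintype ι] (G : SimpleGraph V) (w : Sym2 V → ℝ)
    (A B C : Set V) (g₁ g₂ : Equiv.Perm ι) : ℝ :=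
  sInf {a | ∃ g : V → Equiv.Perm ι,
    (∀ v ∈ A, g v = g₁) ∧ (∀ v ∈ B, g v = g₂) ∧ (∀ v ∈ C, g v = 1) ∧
    a = Renergy G w g}

/-! ### The set-partition optimization `Q` -/

/-- The symmetric integer edge function induced by the partition distance of a vertex
configuration of partitions. -/
def partEZ {κ : Type*} (q : V → Setoid κ) : Sym2 V → ℤ :=
  Sym2.lift ⟨fun x y => pdist (q x) (q y), fun x y => pdist_comm (q x) (q y)⟩

/-- The free energy `Q(q) = Σ_e w(e) d(q(x),q(y))`. -/
def Qenergy {κ : Type*} (G : SimpleGraph V) (w : Sym2 V → ℝ)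
    (q : V → Setoid κ) : ℝ :=
  wsum (fun e => w e * (partEZ q e : ℝ)) G.edgeSet

/-- The optimal value `Q` of the set-partition optimization. -/
def Qval {κ : Type*} (G : SimpleGraph V) (w : Sym2 V → ℝ)
    (A B C : Set V) (q₁ q₂ : Setoid κ) : ℝ :=
  sInf {a | ∃ q : V → Setoid κ,
    (∀ v ∈ A, q v = q₁) ∧ (∀ v ∈ B, q v = q₂) ∧ (∀ v ∈ C, q v = ⊥) ∧
    a = Qenergy G w q}

/-! ### The Boolean optimization `B` -/

/-- The Hamming distance between two bit strings. -/
def ham {κ : Type*} [Fintype κ] (b₁ b₂ : κ → Bool) : ℤ :=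
  ∑ k : κ, if b₁ k = b₂ k then 0 else 1

/-- The bit string `b(q)` of a partition: `false` exactly at singlets. -/
def bvec {κ : Type*} (p : Setoid κ) : κ → Bool :=
  fun u => if IsSinglet p u then false else true

/-- Feasibility of `r` for the Boolean program at configuration `b`. -/
def Bfeas {κ : Type*} [Fintype κ] (G : SimpleGraph V) (A B : Set V) (n : ℕ)
    (b : V → κ → Bool) (r : Sym2 V → ℕ) : Prop :=
  (∀ x ∈ A, ∀ y ∈ B, ∀ L : G.Walk x y,
    2 ∣ wkSum (fun e => (r e : ℤ)) L ∧
    wkSum (fun e => (r e : ℤ)) L ≥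
      2 * ((n : ℤ) - if ∀ v ∈ L.support, ∀ k, b v k = true then 1 else 0)) ∧
  (∀ x y : V, G.Adj x y → (r s(x, y) : ℤ) ≥ ⌈(ham (b x) (b y) : ℚ) / 2⌉)

/-- The inner Boolean optimum `B(b)` at a fixed Boolean configuration `b`. -/
def BvalAt {κ : Type*} [Fintype κ] (G : SimpleGraph V) (w : Sym2 V → ℝ)
    (A B : Set V) (n : ℕ) (b : V → κ → Bool) : ℝ :=
  sInf {a | ∃ r : Sym2 V → ℕ, Bfeas G A B n b r ∧
    a = wsum (fun e => w e * (r e : ℝ)) G.edgeSet}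

/-- The optimal value `B` of the Boolean optimization. -/
def Bval (κ : Type*) [Fintype κ] (G : SimpleGraph V) (w : Sym2 V → ℝ)
    (A B C : Set V) (n : ℕ) : ℝ :=
  sInf {a | ∃ b : V → κ → Bool,
    (∀ v ∈ A ∪ B, ∀ k, b v k = true) ∧ (∀ v ∈ C, ∀ k, b v k = false) ∧
    ∃ r : Sym2 V → ℕ, Bfeas G A B n b r ∧
      a = wsum (fun e => w e * (r e : ℝ)) G.edgeSet}

/-! ### The integer program `I` -/

/-- Feasibility of `(ρ,σ)` for the integer program. -/
def IPfeas (G : SimpleGraph V) (A B C : Set V) (n : ℕ) (ρ σ : Sym2 V → ℕ) : Prop :=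
  (∀ x ∈ A, ∀ y ∈ B, ∀ L : G.Walk x y,
    2 ∣ wkSum (fun e => (σ e : ℤ) + (ρ e : ℤ)) L ∧
    wkSum (fun e => (σ e : ℤ) + (ρ e : ℤ)) L ≥
      2 * ((n : ℤ) - if wkSum (fun e => (ρ e : ℤ)) L = 0 then 1 else 0)) ∧
  (∀ x ∈ A ∪ B, ∀ y ∈ C, ∀ L : G.Walk x y,
    wkSum (fun e => (ρ e : ℤ)) L ≥ (n : ℤ))

/-- The objective of the integer program. -/
def IPobj (G : SimpleGraph V) (w : Sym2 V → ℝ) (ρ σ : Sym2 V → ℕ) : ℝ :=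
  wsum (fun e => w e * ((σ e : ℝ) + (ρ e : ℝ))) G.edgeSet

/-- The optimal value `I` of the integer program. -/
def Ival (G : SimpleGraph V) (w : Sym2 V → ℝ) (A B C : Set V) (n : ℕ) : ℝ :=
  sInf {a | ∃ ρ σ : Sym2 V → ℕ, IPfeas G A B C n ρ σ ∧ a = IPobj G w ρ σ}

/-! ### The ℓ-intersecting cut problem `M` -/

/-- Feasibility for the `ℓ`-intersecting cut problem with boundary sets
`Γ₀, …, Γ_ℓ` and `C`, for a half-integer valued `ϱ`. -/
def Mfeas (G : SimpleGraph V) (Γ : ℕ → Set V) (ℓ : ℕ) (C : Set V)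
    (ϱ : Sym2 V → ℚ) : Prop :=
  (∀ e, ∃ j : ℕ, ϱ e = (j : ℚ) / 2) ∧
  (∀ k k' : ℕ, k ≤ ℓ → k' ≤ ℓ → ∀ x ∈ Γ k, ∀ y ∈ Γ k', ∀ L : G.Walk x y,
    ∃ j : ℕ, wkSum ϱ L = |(k : ℚ) - (k' : ℚ)| + (j : ℚ)) ∧
  (∀ k : ℕ, k ≤ ℓ → ∀ x ∈ Γ k, ∀ y ∈ C, ∀ L : G.Walk x y,
    ∃ j : ℕ, wkSum ϱ L = (ℓ : ℚ) / 2 + (j : ℚ))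

/-- The objective of the `ℓ`-intersecting cut problem. -/
def Mobj (G : SimpleGraph V) (w : Sym2 V → ℝ) (ϱ : Sym2 V → ℚ) : ℝ :=
  wsum (fun e => w e * (ϱ e : ℝ)) G.edgeSet

/-- The optimal value `M` of the `ℓ`-intersecting cut problem. -/
def Mval (G : SimpleGraph V) (w : Sym2 V → ℝ) (Γ : ℕ → Set V) (ℓ : ℕ)
    (C : Set V) : ℝ :=
  sInf {a | ∃ ϱ : Sym2 V → ℚ, Mfeas G Γ ℓ C ϱ ∧ a = Mobj G w ϱ}

/-- The complementary reduced graph `G^c`: the edges of `G` not lying entirely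
inside `V'`. -/
def reducedGraph (G : SimpleGraph V) (V' : Set V) : SimpleGraph V where
  Adj x y := G.Adj x y ∧ ¬ (x ∈ V' ∧ y ∈ V')
  symm := by
    constructor
    intro x y h
    exact ⟨h.1.symm, fun hc => h.2 ⟨hc.2, hc.1⟩⟩
  loopless := by
    constructor
    intro x h
    exact G.loopless.irrefl x h.1

end RTN

/-!
Label the `4n` blocks of `P(X̃)` by the half-blocks `(k, upper/lower)` of the two copies. Then
`q̃_B` pairs the two halves of each block `k`, `q̃_A` pairs the lower half of `k` with the upper
half of `k + 1`, and in each copy the two matchings form a single cycle through its `2n`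
half-blocks, so `q̃_A ∨ q̃_B = τ`. Expanding the distances, the claim becomes
`#(q ∨ q̃_A) + #(q ∨ q̃_B) + [singlet in copy 1] + [singlet in copy 2] ≤ #(q) + #(q ∨ τ)`
together with `#(q ∨ τ) + δ_{q∨τ,𝟙} ≤ 2`. Without the singlet terms the first inequality is
semimodularity of the partition lattice. If `v` is a singlet of `q`, delete the `q̃_B`-edge at `v`:
the cycle of that copy stays connected, so semimodularity still applies to the smaller matching
`q̃_B'`, while putting the edge back joins the block `{v}` of `q ∨ q̃_B'` to another one, so
`#(q ∨ q̃_B) < #(q ∨ q̃_B')`.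
-/

namespace RTN

lemma ite_one_zero_le_ite {P Q : Prop} [Decidable P] [Decidable Q] (h : P → Q) :
    (if P then (1 : ℤ) else 0) ≤ if Q then 1 else 0 := by
  split_ifs <;> simp_all

lemma one_sub_ite_le_ite {P Q : Prop} [Decidable P] [Decidable Q] (h : ¬P → Q) :
    1 - (if P then (1 : ℤ) else 0) ≤ if Q then 1 else 0 := by
  split_ifs <;> simp_all

lemma exists_imp_witness {β : Type*} [Nonempty β] (P : β → Prop) :
    ∃ b, (∃ b, P b) → P b := by
  by_cases h : ∃ b, P b
  · exact h.imp fun _ hb _ => hb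
  · exact ⟨Classical.arbitrary β, fun h' => (h h').elim⟩

section Partitions

variable {α : Type*}

lemma nb_le_nb_of_le [Finite α] {s t : Setoid α} (h : s ≤ t) : nb t ≤ nb s := by
  unfold nb
  exact_mod_cast Nat.card_le_card_of_surjective (Setoid.map_of_le h)
    (Quotient.ind fun a => ⟨⟦a⟧, rfl⟩)

lemma nb_lt_nb_of_lt [Finite α] {s t : Setoid α} (h : s < t) : nb t < nb s := by
  obtain ⟨x, y, hxy, hnxy⟩ : ∃ x y, t.r x y ∧ ¬ s.r x y := by
    simpa [Setoid.le_def] using h.not_ge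
  have hsurj : Function.Surjective (Setoid.map_of_le h.le) := Quotient.ind fun a => ⟨⟦a⟧, rfl⟩
  have hninj : ¬ Function.Injective (Setoid.map_of_le h.le) := fun hinj =>
    hnxy (Quotient.exact (hinj (Quotient.sound hxy : (⟦x⟧ : Quotient t) = ⟦y⟧)))
  have := Fintype.ofFinite (Quotient s)
  unfold nb
  rw [Nat.card_eq_fintype_card, Nat.card_eq_fintype_card]
  exact_mod_cast Fintype.card_lt_of_surjective_not_injective _ hsurj hninj

lemma nb_top [Nonempty α] : nb (⊤ : Setoid α) = 1 := by
  have : Subsingleton (Quotient (⊤ : Setoid α)) :=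
    ⟨Quotient.ind₂ fun _ _ => Quotient.sound trivial⟩
  simp [nb, Nat.card_eq_one_iff_unique.mpr ⟨this, ⟨Quotient.mk _ (Classical.arbitrary α)⟩⟩]

/-- `s` with the blocks of `x` and `y` merged, i.e. `s ⊔ {x ~ y}`. -/
def merge (s : Setoid α) (x y : α) : Setoid α :=
  Setoid.ker fun a => if s.r a y then (⟦x⟧ : Quotient s) else ⟦a⟧

lemma le_merge (s : Setoid α) (x y : α) : s ≤ merge s x y := by
  intro a b hab
  have : s.r a y ↔ s.r b y := ⟨s.trans (s.symm hab), s.trans hab⟩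
  change (if s.r a y then _ else _) = (if s.r b y then _ else _)
  simp only [this]
  split_ifs
  · rfl
  · exact Quotient.sound hab

lemma merge_rel (s : Setoid α) (x y : α) : (merge s x y).r x y := by
  change (if s.r x y then _ else _) = (if s.r y y then _ else _)
  simp only [if_pos (s.refl y), ite_self]

lemma merge_le {s t : Setoid α} {x y : α} (hst : s ≤ t) (hxy : t.r x y) : merge s x y ≤ t := by
  intro a b hab
  change (if s.r a y then _ else _) = (if s.r b y then _ else _) at hab
  split_ifs at hab with ha hb hb
  · exact t.trans (hst ha) (t.symm (hst hb))
  · exact t.trans (hst ha) (t.trans (t.symm hxy) (hst (Quotient.exact hab)))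
  · exact t.trans (hst (Quotient.exact hab)) (t.trans hxy (t.symm (hst hb)))
  · exact hst (Quotient.exact hab)

lemma merge_sup (s a : Setoid α) (x y : α) : merge s x y ⊔ a = merge (s ⊔ a) x y :=
  le_antisymm
    (sup_le (merge_le (le_sup_left.trans (le_merge _ x y)) (merge_rel _ x y))
      (le_sup_right.trans (le_merge _ x y)))
    (merge_le (sup_le_sup_right (le_merge s x y) a)
      (le_sup_left (a := merge s x y) (merge_rel s x y)))

/-- Every block of `s` other than that of `y` is still a value of the labelling defining
`merge s x y`. -/
lemma nb_le_nb_merge_add_one [Finite α] (s : Setoid α) (x y : α) :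
    nb s ≤ nb (merge s x y) + 1 := by
  set f : α → Quotient s := fun a => if s.r a y then ⟦x⟧ else ⟦a⟧
  have hcover : (Set.univ : Set (Quotient s)) ⊆ Set.range f ∪ {⟦y⟧} := by
    rintro z -
    induction z using Quotient.ind with | _ a => ?_
    by_cases ha : s.r a y
    · exact Or.inr (Quotient.sound ha)
    · exact Or.inl ⟨a, if_neg ha⟩
  have hcard := (Set.ncard_le_ncard hcover).trans (Set.ncard_union_le _ _)
  rw [Set.ncard_univ, Set.ncard_singleton, ← Nat.card_coe_set_eq,
    ← Nat.card_congr (Setoid.quotientKerEquivRange f)] at hcard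
  unfold nb merge
  exact_mod_cast hcard

/-- Semimodularity of the partition lattice. -/
lemma nb_sub_nb_sup_antitone [Finite α] {s t : Setoid α} (hst : s ≤ t) (a : Setoid α) :
    nb t - nb (t ⊔ a) ≤ nb s - nb (s ⊔ a) := by
  induction hN : Nat.card (Quotient s) using Nat.strong_induction_on generalizing s with
  | _ N ih =>
    obtain rfl | hlt := hst.eq_or_lt
    · rfl
    obtain ⟨x, y, hxy, hnxy⟩ : ∃ x y, t.r x y ∧ ¬ s.r x y := by
      simpa [Setoid.le_def] using hlt.not_ge
    have hs : s < merge s x y := (le_merge s x y).lt_of_ne fun h => hnxy (h ▸ merge_rel s x y)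
    have hfewer := nb_lt_nb_of_lt hs
    have hmerge := nb_le_nb_merge_add_one (s ⊔ a) x y
    rw [← merge_sup] at hmerge
    have := ih _ (by unfold nb at hfewer; omega) (merge_le hst hxy) rfl
    omega

lemma IsSinglet.sup {s t : Setoid α} {v : α} (hs : IsSinglet s v) (ht : IsSinglet t v) :
    IsSinglet (s ⊔ t) v := by
  have hle : ∀ u : Setoid α, IsSinglet u v → u ≤ Setoid.ker (· = v) := fun u hu a b hab =>
    eq_iff_iff.mpr ⟨fun ha => hu b (ha ▸ hab), fun hb => hu a (u.symm (hb ▸ hab))⟩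
  intro z hz
  exact (eq_iff_iff.mp (sup_le (hle s hs) (hle t ht) hz)).mp rfl

def isolate (b : Setoid α) (v : α) : Setoid α := b ⊓ Setoid.ker (· = v)

lemma isSinglet_isolate (b : Setoid α) (v : α) : IsSinglet (isolate b v) v :=
  fun _ h => (eq_iff_iff.mp h.2).mp rfl

lemma isolate_rel_iff {b : Setoid α} {v x y : α} :
    (isolate b v).r x y ↔ b.r x y ∧ (x = v ↔ y = v) := and_congr_right' eq_iff_iff

lemma nb_sup_add_ite_le_nb_sup_isolate [Finite α] (s : Setoid α) {b : Setoid α} {v w : α}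
    (hvw : b.r v w) (hwv : w ≠ v) :
    nb (s ⊔ b) + (if IsSinglet s v then 1 else 0) ≤ nb (s ⊔ isolate b v) := by
  have hle : s ⊔ isolate b v ≤ s ⊔ b := sup_le_sup_left inf_le_left s
  split_ifs with hs
  · refine Int.add_one_le_of_lt (nb_lt_nb_of_lt (hle.lt_of_ne fun h => hwv ?_))
    exact (hs.sup (isSinglet_isolate b v)) w (h ▸ le_sup_right (a := s) hvw)
  · simpa using nb_le_nb_of_le hle

end Partitions

section Transport

variable {α β : Type*}

def comapOrderIso (e : α ≃ β) : Setoid β ≃o Setoid α where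
  toFun := Setoid.comap e
  invFun := Setoid.comap e.symm
  left_inv s := by ext; simp [Setoid.comap_rel]
  right_inv s := by ext; simp [Setoid.comap_rel]
  map_rel_iff' {s t} := ⟨fun h x y hxy => by
      have : t.r (e (e.symm x)) (e (e.symm y)) :=
        @h (e.symm x) (e.symm y) (show s.r (e (e.symm x)) (e (e.symm y)) by simpa using hxy)
      simpa using this,
    fun h _ _ hxy => h hxy⟩

lemma comap_sup_of_equiv (e : α ≃ β) (s t : Setoid β) :
    Setoid.comap e (s ⊔ t) = Setoid.comap e s ⊔ Setoid.comap e t :=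
  (comapOrderIso e).map_sup s t

lemma comap_eq_top_iff_of_equiv (e : α ≃ β) (s : Setoid β) : Setoid.comap e s = ⊤ ↔ s = ⊤ :=
  map_eq_top_iff (comapOrderIso e)

lemma nb_comap_of_equiv (e : α ≃ β) (s : Setoid β) : nb (Setoid.comap e s) = nb s := by
  unfold nb
  exact_mod_cast Nat.card_congr (Quotient.congr e fun _ _ => Iff.rfl)

lemma isSinglet_comap_of_equiv (e : α ≃ β) (s : Setoid β) (x : α) :
    IsSinglet (Setoid.comap e s) x ↔ IsSinglet s (e x) :=
  ⟨fun h z hz => by simpa using congrArg e (h (e.symm z) (by simpa [Setoid.comap_rel] using hz)),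
    fun h z hz => e.injective (h (e z) hz)⟩

end Transport

open Equiv Equiv.Perm

section Cycles

variable {α β ι κ : Type*}

lemma sameCycle_of_semiconj [Finite β] {σ : Perm β} {g : Perm α} {φ : β → α}
    (h : Function.Semiconj φ σ g) {a b : β} (hab : σ.SameCycle a b) :
    g.SameCycle (φ a) (φ b) := by
  obtain ⟨k, -, rfl⟩ := hab.exists_pow_eq'
  exact ⟨k, by simpa only [zpow_natCast, coe_pow] using (h.iterate_right k a).symm⟩

lemma sameCycle_iff_of_invariant [Finite α] {g : Perm α} (f : α → ι)
    (hinv : ∀ x, f (g x) = f x) (htr : ∀ x y, f x = f y → g.SameCycle x y) (x y : α) :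
    g.SameCycle x y ↔ f x = f y :=
  ⟨fun h => sameCycle_one.mp (sameCycle_of_semiconj (g := 1) hinv h), htr x y⟩

lemma sameCycle_sumCongr_iff [Finite α] [Finite β] {g : Perm α} {h : Perm β} {f : α → ι}
    {f' : β → κ} (hg : ∀ x y, g.SameCycle x y ↔ f x = f y)
    (hh : ∀ x y, h.SameCycle x y ↔ f' x = f' y) (x y : α ⊕ β) :
    SameCycle (Equiv.sumCongr g h) x y ↔ Sum.map f f' x = Sum.map f f' y := by
  refine sameCycle_iff_of_invariant _ ?_ ?_ x y
  · rintro (x | x)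
    · simpa using (hg _ _).mp (sameCycle_apply_left.mpr SameCycle.rfl)
    · simpa using (hh _ _).mp (sameCycle_apply_left.mpr SameCycle.rfl)
  · rintro (x | x) (y | y) hxy <;> simp only [Sum.map_inl, Sum.map_inr, Sum.inl.injEq,
      Sum.inr.injEq, reduceCtorEq] at hxy
    · exact sameCycle_of_semiconj (φ := Sum.inl) (fun _ => rfl) ((hg x y).mpr hxy)
    · exact sameCycle_of_semiconj (φ := Sum.inr) (fun _ => rfl) ((hh x y).mpr hxy)

lemma sameCycle_finRotate {N : ℕ} (i j : Fin N) : (finRotate N).SameCycle i j := by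
  rcases lt_or_ge N 2 with hN | hN
  · have : Subsingleton (Fin N) := Fin.subsingleton_iff_le_one.mpr (by omega)
    exact Subsingleton.elim i j ▸ SameCycle.refl _ _
  · have hmem : ∀ k, finRotate N k ≠ k := fun k =>
      mem_support.mp (support_finRotate_of_le hN ▸ Finset.mem_univ k)
    exact (isCycle_finRotate_of_le hN).sameCycle (hmem i) (hmem j)

lemma coarse_mk_iff {g₀ : Perm α} {p : Setoid α} (h : orbitSetoid g₀ ≤ p) (x y : α) :
    (coarse g₀ p).r (Quotient.mk _ x) (Quotient.mk _ y) ↔ p.r x y := by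
  constructor
  · rintro ⟨x', y', hx, hy, hxy⟩
    rw [sup_eq_left.mpr h] at hxy
    exact p.trans (p.symm (h (Quotient.exact hx))) (p.trans hxy (h (Quotient.exact hy)))
  · exact fun hxy => ⟨x, y, rfl, rfl, le_sup_left (a := p) hxy⟩

def orbitEquiv {g₀ : Perm α} {F : α → ι} (hF : ∀ x y, g₀.SameCycle x y ↔ F x = F y)
    (hsurj : Function.Surjective F) : Quotient (orbitSetoid g₀) ≃ ι :=
  (Quotient.congrRight hF).trans (Setoid.quotientKerEquivOfSurjective F hsurj)

lemma orbitEquiv_mk {g₀ : Perm α} {F : α → ι} (hF : ∀ x y, g₀.SameCycle x y ↔ F x = F y)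
    (hsurj : Function.Surjective F) (x : α) :
    orbitEquiv hF hsurj (Quotient.mk _ x) = F x := rfl

lemma qc_eq_comap_orbitEquiv {g₀ g : Perm α} {F : α → ι} {G : ι → κ}
    (hF : ∀ x y, g₀.SameCycle x y ↔ F x = F y) (hsurj : Function.Surjective F)
    (hg : ∀ x y, g.SameCycle x y ↔ G (F x) = G (F y)) :
    qc g₀ g = Setoid.comap (orbitEquiv hF hsurj) (Setoid.ker G) := by
  ext u v
  induction u, v using Quotient.inductionOn₂ with | _ x y => ?_
  rw [qc, coarse_mk_iff (fun x y hxy => (hg x y).mpr (congrArg G ((hF x y).mp hxy)))]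
  exact hg x y

end Cycles

section HalfBlocks

variable {n : ℕ}

/-- A block `k` of `{1,…,mn}` together with a choice of its upper (`0`) or lower (`1`) half. -/
abbrev HalfBlock (n : ℕ) := Fin n × Fin 2

/-- `γ` moves the lower half of block `k` to block `k + 1`. -/
def shiftA (x : HalfBlock n) : Fin n := if x.2 = 1 then finRotate n x.1 else x.1

def matchingA (n : ℕ) : Setoid (HalfBlock n ⊕ HalfBlock n) := Setoid.ker (Sum.map shiftA shiftA)

def matchingB (n : ℕ) : Setoid (HalfBlock n ⊕ HalfBlock n) :=
  Setoid.ker (Sum.map Prod.fst Prod.fst)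

def copySetoid (n : ℕ) : Setoid (HalfBlock n ⊕ HalfBlock n) := Setoid.ker Sum.isLeft

lemma matchingA_rel_iff {a b : HalfBlock n ⊕ HalfBlock n} :
    (matchingA n).r a b ↔ Sum.map shiftA shiftA a = Sum.map shiftA shiftA b := Iff.rfl

lemma matchingB_rel_iff {a b : HalfBlock n ⊕ HalfBlock n} :
    (matchingB n).r a b ↔ Sum.map Prod.fst Prod.fst a = Sum.map Prod.fst Prod.fst b := Iff.rfl

/-- The `A`-edges `(k,1) ~ (k+1,0)` and the `B`-edges `(k,0) ~ (k,1)` form one cycle through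
all half-blocks; without the `B`-edge at `k₀` it is still a path through all of them. -/
lemma rel_of_cycle (J : Setoid (HalfBlock n)) (k₀ : Fin n)
    (hA : ∀ k, J.r (k, 1) (finRotate n k, 0)) (hB : ∀ k, k ≠ k₀ → J.r (k, 0) (k, 1))
    (x y : HalfBlock n) : J.r x y := by
  set start := finRotate n k₀
  have hwalk : ∀ t : ℕ, J.r (start, 0) (((finRotate n) ^ t) start, 0) := by
    intro t
    induction t with
    | zero => exact J.refl _
    | succ t ih =>
      rw [pow_succ', Equiv.Perm.mul_apply]
      by_cases hk : ((finRotate n) ^ t) start = k₀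
      · rw [hk]
      · exact J.trans ih (J.trans (hB _ hk) (hA _))
  have hlower : ∀ k, J.r (start, 0) (k, 0) := fun k => by
    obtain ⟨t, -, ht⟩ := (sameCycle_finRotate start k).exists_pow_eq'
    exact ht ▸ hwalk t
  have hall : ∀ z : HalfBlock n, J.r (start, 0) z := by
    rintro ⟨k, h⟩
    fin_cases h
    · exact hlower k
    · exact J.trans (hlower _) (J.symm (hA k))
  exact J.trans (J.symm (hall x)) (hall y)

lemma matchingA_sup_matchingB_le : matchingA n ⊔ matchingB n ≤ copySetoid n := by
  refine sup_le ?_ ?_ <;>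
  · rintro (a | a) (b | b) hab <;> first | rfl | cases hab

lemma copySetoid_le_matchingA_sup_isolate (v₀ v₁ : HalfBlock n) :
    copySetoid n ≤
      matchingA n ⊔ isolate (isolate (matchingB n) (Sum.inl v₀)) (Sum.inr v₁) := by
  set b := isolate (isolate (matchingB n) (Sum.inl v₀)) (Sum.inr v₁)
  set J := matchingA n ⊔ b
  have hA : ∀ {x y}, (matchingA n).r x y → J.r x y := fun h => le_sup_left (b := b) h
  have hB : ∀ {x y}, b.r x y → J.r x y := fun h => le_sup_right (a := matchingA n) h
  rintro (x | x) (y | y) hxy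
  · refine rel_of_cycle (Setoid.comap Sum.inl J) v₀.1 (fun k => hA ?_) (fun k hk => hB ?_) x y
    · simp [matchingA_rel_iff, shiftA]
    · simp [b, isolate_rel_iff, matchingB_rel_iff, Prod.ext_iff, hk]
  · cases hxy
  · cases hxy
  · refine rel_of_cycle (Setoid.comap Sum.inr J) v₁.1 (fun k => hA ?_) (fun k hk => hB ?_) x y
    · simp [matchingA_rel_iff, shiftA]
    · simp [b, isolate_rel_iff, matchingB_rel_iff, Prod.ext_iff, hk]

variable [NeZero n]

lemma nb_sup_matchingA_add_nb_sup_matchingB_le (p : Setoid (HalfBlock n ⊕ HalfBlock n)) :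
    nb (p ⊔ matchingA n) + nb (p ⊔ matchingB n)
      + (if ∃ v, IsSinglet p (Sum.inl v) then 1 else 0)
      + (if ∃ v, IsSinglet p (Sum.inr v) then 1 else 0) ≤ nb p + nb (p ⊔ copySetoid n) := by
  obtain ⟨v₀, h₀⟩ := exists_imp_witness fun v => IsSinglet p (Sum.inl v)
  obtain ⟨v₁, h₁⟩ := exists_imp_witness fun v => IsSinglet p (Sum.inr v)
  have hpartner : ∀ v : HalfBlock n, (v.1, v.2 + 1) ≠ v := fun v h => by
    have : ∀ i : Fin 2, i + 1 ≠ i := by decide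
    exact this v.2 (congrArg Prod.snd h)
  set b₁ := isolate (matchingB n) (Sum.inl v₀)
  set b₂ := isolate b₁ (Sum.inr v₁)
  have gain₀ : nb (p ⊔ matchingB n) + (if IsSinglet p (Sum.inl v₀) then 1 else 0) ≤ nb (p ⊔ b₁) :=
    nb_sup_add_ite_le_nb_sup_isolate p (w := Sum.inl (v₀.1, v₀.2 + 1))
      (by simp [matchingB_rel_iff]) (by simpa using hpartner v₀)
  have gain₁ : nb (p ⊔ b₁) + (if IsSinglet p (Sum.inr v₁) then 1 else 0) ≤ nb (p ⊔ b₂) :=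
    nb_sup_add_ite_le_nb_sup_isolate p (w := Sum.inr (v₁.1, v₁.2 + 1))
      (by simp [b₁, isolate_rel_iff, matchingB_rel_iff]) (by simpa using hpartner v₁)
  have hsemi := nb_sub_nb_sup_antitone (le_sup_left : p ≤ p ⊔ b₂) (matchingA n)
  have hcut : p ⊔ copySetoid n ≤ p ⊔ b₂ ⊔ matchingA n := by
    rw [sup_assoc, sup_comm b₂]
    exact sup_le_sup_left (copySetoid_le_matchingA_sup_isolate v₀ v₁) p
  have hcut_nb := nb_le_nb_of_le hcut
  have hwit₀ := ite_one_zero_le_ite h₀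
  have hwit₁ := ite_one_zero_le_ite h₁
  linarith

lemma nb_copySetoid : nb (copySetoid n) = 2 := by
  have hsurj : Function.Surjective (Sum.isLeft : HalfBlock n ⊕ HalfBlock n → Bool) := by
    rintro (_ | _)
    exacts [⟨Sum.inr (0, 0), rfl⟩, ⟨Sum.inl (0, 0), rfl⟩]
  rw [nb, copySetoid, Nat.card_congr (Setoid.quotientKerEquivOfSurjective _ hsurj)]
  simp

lemma nb_sup_copySetoid_add_ite_le (p : Setoid (HalfBlock n ⊕ HalfBlock n)) :
    nb (p ⊔ copySetoid n) + (if p ⊔ copySetoid n = ⊤ then 1 else 0) ≤ 2 := by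
  split_ifs with h
  · rw [h, nb_top]
    norm_num
  · simpa [nb_copySetoid] using nb_le_nb_of_le (le_sup_right : copySetoid n ≤ p ⊔ copySetoid n)

end HalfBlocks


section StandardElements

variable {n m : ℕ}

def halfBlock (hm : m % 2 = 0) (x : Fin n × Fin m) : HalfBlock n :=
  (x.1, ((halfEquiv m hm).symm x.2).1)

lemma halfBlock_surjective (hm : m % 2 = 0) (hm2 : 2 ≤ m) :
    Function.Surjective (halfBlock (n := n) hm) := fun x =>
  ⟨(x.1, halfEquiv m hm (x.2, ⟨0, by omega⟩)), by simp [halfBlock]⟩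

lemma sameCycle_Xel_iff (hm : m % 2 = 0) (x y : Fin n × Fin m) :
    (Xel n m hm).SameCycle x y ↔ halfBlock hm x = halfBlock hm y := by
  refine sameCycle_iff_of_invariant _ (fun x => ?_) (fun x y hxy => ?_) x y
  · simp [halfBlock, Xel]
  · obtain ⟨k, ℓ⟩ := x
    obtain ⟨k', ℓ'⟩ := y
    obtain ⟨⟨h, j⟩, rfl⟩ := (halfEquiv m hm).surjective ℓ
    obtain ⟨⟨h', j'⟩, rfl⟩ := (halfEquiv m hm).surjective ℓ'
    simp only [halfBlock, Equiv.symm_apply_apply, Prod.mk.injEq] at hxy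
    obtain ⟨rfl, rfl⟩ := hxy
    exact sameCycle_of_semiconj (φ := fun j => (k, halfEquiv m hm (h, j)))
      (fun j => by simp [Xel]) (sameCycle_finRotate j j')

lemma sameCycle_gB_iff (x y : Fin n × Fin m) : (gB n m).SameCycle x y ↔ x.1 = y.1 := by
  refine sameCycle_iff_of_invariant Prod.fst (fun _ => rfl) (fun x y hxy => ?_) x y
  obtain ⟨k, ℓ⟩ := x
  obtain ⟨k', ℓ'⟩ := y
  obtain rfl : k = k' := hxy
  exact sameCycle_of_semiconj (φ := Prod.mk k) (fun _ => rfl) (sameCycle_finRotate ℓ ℓ')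

lemma sameCycle_gA_iff (x y : Fin n × Fin m) :
    (gA n m).SameCycle x y ↔ (gamma n m x).1 = (gamma n m y).1 := by
  have : gA n m = (gamma n m)⁻¹ * gB n m * (gamma n m)⁻¹⁻¹ := by rw [inv_inv]; rfl
  rw [this, sameCycle_conj, inv_inv, sameCycle_gB_iff]

lemma half_le_iff (hm : m % 2 = 0) (ℓ : Fin m) :
    m / 2 ≤ (ℓ : ℕ) ↔ ((halfEquiv m hm).symm ℓ).1 = 1 := by
  obtain ⟨⟨h, j⟩, rfl⟩ := (halfEquiv m hm).surjective ℓ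
  have hval : ((halfEquiv m hm (h, j) : Fin m) : ℕ) = j + m / 2 * h := by
    simp [halfEquiv, finProdFinEquiv]
  rw [Equiv.symm_apply_apply, hval]
  fin_cases h <;> simp

lemma gamma_fst (hm : m % 2 = 0) (x : Fin n × Fin m) :
    (gamma n m x).1 = shiftA (halfBlock hm x) := by
  simp only [gamma, Equiv.coe_fn_mk, shiftA, halfBlock, ← half_le_iff hm]
  split_ifs <;> rfl

def halfBlock₂ (hm : m % 2 = 0) : DIdx n m → HalfBlock n ⊕ HalfBlock n :=
  Sum.map (halfBlock hm) (halfBlock hm)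

lemma sameCycle_Xt_iff (hm : m % 2 = 0) (x y : DIdx n m) :
    (Xt n m hm).SameCycle x y ↔ halfBlock₂ hm x = halfBlock₂ hm y :=
  sameCycle_sumCongr_iff (sameCycle_Xel_iff hm) (sameCycle_Xel_iff hm) x y

lemma sameCycle_gBt_iff (hm : m % 2 = 0) (x y : DIdx n m) :
    (gBt n m).SameCycle x y ↔
      Sum.map Prod.fst Prod.fst (halfBlock₂ hm x) =
        Sum.map Prod.fst Prod.fst (halfBlock₂ hm y) := by
  simp only [halfBlock₂, Sum.map_map]
  exact sameCycle_sumCongr_iff sameCycle_gB_iff sameCycle_gB_iff x y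

lemma sameCycle_gAt_iff (hm : m % 2 = 0) (x y : DIdx n m) :
    (gAt n m).SameCycle x y ↔
      Sum.map shiftA shiftA (halfBlock₂ hm x) = Sum.map shiftA shiftA (halfBlock₂ hm y) := by
  have hA : ∀ x y, (gA n m).SameCycle x y ↔ shiftA (halfBlock hm x) = shiftA (halfBlock hm y) :=
    fun x y => by rw [sameCycle_gA_iff, gamma_fst hm, gamma_fst hm]
  simp only [halfBlock₂, Sum.map_map]
  exact sameCycle_sumCongr_iff hA hA x y

def blockEquiv (hm : m % 2 = 0) (hm2 : 2 ≤ m) : BXt n m hm ≃ HalfBlock n ⊕ HalfBlock n :=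
  orbitEquiv (sameCycle_Xt_iff hm)
    (Sum.map_surjective.mpr ⟨halfBlock_surjective hm hm2, halfBlock_surjective hm hm2⟩)

lemma blockEquiv_mk (hm : m % 2 = 0) (hm2 : 2 ≤ m) (x : DIdx n m) :
    blockEquiv hm hm2 (Quotient.mk _ x) = halfBlock₂ hm x := rfl

lemma qAt_eq_comap (hm : m % 2 = 0) (hm2 : 2 ≤ m) :
    qAt n m hm = Setoid.comap (blockEquiv hm hm2) (matchingA n) :=
  qc_eq_comap_orbitEquiv _ _ (sameCycle_gAt_iff hm)

lemma qBt_eq_comap (hm : m % 2 = 0) (hm2 : 2 ≤ m) :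
    qBt n m hm = Setoid.comap (blockEquiv hm hm2) (matchingB n) :=
  qc_eq_comap_orbitEquiv _ _ (sameCycle_gBt_iff hm)

lemma inCopy1_iff (hm : m % 2 = 0) (hm2 : 2 ≤ m) (u : BXt n m hm) :
    inCopy1 u ↔ (blockEquiv hm hm2 u).isLeft := by
  induction u using Quotient.inductionOn with | _ x => ?_
  rw [blockEquiv_mk]
  constructor
  · rintro ⟨x', hx'⟩
    have := (sameCycle_Xt_iff hm _ _).mp (Quotient.exact hx')
    cases x <;> simp_all [halfBlock₂]
  · cases x
    · exact fun _ => ⟨_, rfl⟩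
    · simp [halfBlock₂]

lemma tau_eq_comap (hm : m % 2 = 0) (hm2 : 2 ≤ m) :
    tau n m hm = Setoid.comap (blockEquiv hm hm2) (copySetoid n) := by
  ext u v
  show (inCopy1 u ↔ inCopy1 v) ↔ _
  rw [inCopy1_iff hm hm2, inCopy1_iff hm hm2, ← Bool.eq_iff_iff]
  rfl

lemma exists_isSinglet_inl_of_nS1_ne_zero (hm : m % 2 = 0) (hm2 : 2 ≤ m)
    {p : Setoid (HalfBlock n ⊕ HalfBlock n)}
    (h : nS1 (Setoid.comap (blockEquiv hm hm2) p) ≠ 0) : ∃ v, IsSinglet p (Sum.inl v) := by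
  obtain ⟨⟨u, hs, hc⟩⟩ := (Nat.card_ne_zero.mp (by unfold nS1 at h; exact_mod_cast h)).1
  rw [isSinglet_comap_of_equiv] at hs
  rw [inCopy1_iff hm hm2] at hc
  cases hu : blockEquiv hm hm2 u with
  | inl v => exact ⟨v, hu ▸ hs⟩
  | inr v => simp [hu] at hc

lemma exists_isSinglet_inr_of_nS2_ne_zero (hm : m % 2 = 0) (hm2 : 2 ≤ m)
    {p : Setoid (HalfBlock n ⊕ HalfBlock n)}
    (h : nS2 (Setoid.comap (blockEquiv hm hm2) p) ≠ 0) : ∃ v, IsSinglet p (Sum.inr v) := by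
  obtain ⟨⟨u, hs, hc⟩⟩ := (Nat.card_ne_zero.mp (by unfold nS2 at h; exact_mod_cast h)).1
  rw [isSinglet_comap_of_equiv] at hs
  rw [inCopy1_iff hm hm2] at hc
  cases hu : blockEquiv hm hm2 u with
  | inl v => simp [hu] at hc
  | inr v => exact ⟨v, hu ▸ hs⟩

end StandardElements

end RTN

/-- For the doubled standard elements `g̃_A, g̃_B, X̃ ∈ S_{2mn}` and every
`q ∈ P_{4n}`:
`d(q̃_A,q) + d(q,q̃_B) ≥ d(q̃_A,q̃_B) + 2(1-δ_{#₁⁽¹⁾(q),0}) + 2(1-δ_{#₁⁽²⁾(q),0}) + 2δ_{q∨τ,𝟙}`. -/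
theorem doubled_improved_triangle_inequality {n m : ℕ} (hn : 2 ≤ n) (hm2 : 2 ≤ m)
    (hm : m % 2 = 0) (q : Setoid (RTN.BXt n m hm)) :
    RTN.pdist (RTN.qAt n m hm) q + RTN.pdist q (RTN.qBt n m hm) ≥
      RTN.pdist (RTN.qAt n m hm) (RTN.qBt n m hm)
      + 2 * (1 - if RTN.nS1 q = 0 then (1 : ℤ) else 0)
      + 2 * (1 - if RTN.nS2 q = 0 then (1 : ℤ) else 0)
      + 2 * (if q ⊔ RTN.tau n m hm = ⊤ then (1 : ℤ) else 0) := by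
  have : NeZero n := ⟨by omega⟩
  obtain ⟨p, rfl⟩ : ∃ p, q = Setoid.comap (RTN.blockEquiv hm hm2) p :=
    ⟨_, ((RTN.comapOrderIso _).apply_symm_apply q).symm⟩
  have hcopy₁ := RTN.one_sub_ite_le_ite (RTN.exists_isSinglet_inl_of_nS1_ne_zero hm hm2 (p := p))
  have hcopy₂ := RTN.one_sub_ite_le_ite (RTN.exists_isSinglet_inr_of_nS2_ne_zero hm hm2 (p := p))
  have hcore := RTN.nb_sup_matchingA_add_nb_sup_matchingB_le p
  have htop := RTN.nb_sup_copySetoid_add_ite_le p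
  have hAB := RTN.nb_le_nb_of_le (RTN.matchingA_sup_matchingB_le (n := n))
  rw [RTN.qAt_eq_comap hm hm2, RTN.qBt_eq_comap hm hm2, RTN.tau_eq_comap hm hm2]
  simp only [RTN.pdist, ← RTN.comap_sup_of_equiv, RTN.nb_comap_of_equiv,
    RTN.comap_eq_top_iff_of_equiv, RTN.nb_copySetoid, sup_comm (RTN.matchingA n) p] at *
  linarith
end
end

section
/- Let G=(V,E) be a weighted graph with boundary ∂=A⊔B⊔C and tensions t=(t_{A:B},t_{B:C},t_{C:A}) with t_{A:C}=t_{B:C}>0 and t_{A:B}>0. If r_C⊆V is a minimal cut for C:A∪B, then there exists an optimal triway cut (α,β,γ) for (A,B,C) with r_C⊆γ. -/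
open scoped Classical

noncomputable section

/-!
Absorbing a minimal cut `r` for `C : A ∪ B` into the `C`-region of an optimal triway cut
`(α, β, γ)` gives the triway cut `(α \ r, β \ r, γ ∪ r)`. Since `t_{B:C} = t_{C:A}`, the area is
`t_{A:B} |μ(α:β)| + t_C |μ(γ)|`. The first term can only shrink, and by submodularity of the
cut function, `|μ(γ ∪ r)| + |μ(γ ∩ r)| ≤ |μ(γ)| + |μ(r)|`, where `|μ(r)| ≤ |μ(γ ∩ r)|` because
`γ ∩ r` is again a cut for `C : A ∪ B`. So the new triway cut is optimal too.
-/

namespace RTN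

variable {V : Type*} [Fintype V]

section WeightedSum

variable (w : Sym2 V → ℝ)

lemma wsum_eq_sum_ite (S : Set (Sym2 V)) : wsum w S = ∑ e, if e ∈ S then w e else 0 :=
  Finset.sum_filter _ _

lemma wsum_mono (hw : ∀ e, 0 ≤ w e) {S T : Set (Sym2 V)} (h : S ⊆ T) :
    wsum w S ≤ wsum w T :=
  Finset.sum_le_sum_of_subset_of_nonneg (Finset.monotone_filter_right _ fun _ _ he => h he)
    fun e _ _ => hw e

end WeightedSum

section CutSurface

variable (G : SimpleGraph V)

omit [Fintype V] in
lemma mk_mem_mu_iff {r : Set V} {x y : V} :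
    s(x, y) ∈ mu G r ↔ G.Adj x y ∧ ¬(x ∈ r ↔ y ∈ r) := by
  simp only [mu, Set.mem_ofPred_eq, SimpleGraph.mem_edgeSet, Sym2.eq_iff]
  constructor
  · rintro ⟨hxy, a, b, (⟨rfl, rfl⟩ | ⟨rfl, rfl⟩), ha, hb⟩ <;> tauto
  · rintro ⟨hxy, hr⟩
    by_cases hx : x ∈ r
    · exact ⟨hxy, x, y, Or.inl ⟨rfl, rfl⟩, hx, by tauto⟩
    · exact ⟨hxy, y, x, Or.inr ⟨rfl, rfl⟩, by tauto, hx⟩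

omit [Fintype V] in
lemma mk_mem_mu2_iff {r₁ r₂ : Set V} {x y : V} :
    s(x, y) ∈ mu2 G r₁ r₂ ↔ G.Adj x y ∧ (x ∈ r₁ ∧ y ∈ r₂ ∨ y ∈ r₁ ∧ x ∈ r₂) := by
  simp only [mu2, Set.mem_ofPred_eq, SimpleGraph.mem_edgeSet, Sym2.eq_iff]
  constructor
  · rintro ⟨hxy, a, b, (⟨rfl, rfl⟩ | ⟨rfl, rfl⟩), ha, hb⟩ <;> tauto
  · rintro ⟨hxy, ⟨hx, hy⟩ | ⟨hy, hx⟩⟩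
    · exact ⟨hxy, x, y, Or.inl ⟨rfl, rfl⟩, hx, hy⟩
    · exact ⟨hxy, y, x, Or.inr ⟨rfl, rfl⟩, hy, hx⟩

omit [Fintype V] in
lemma mu2_mono {r₁ r₂ s₁ s₂ : Set V} (h₁ : r₁ ⊆ s₁) (h₂ : r₂ ⊆ s₂) :
    mu2 G r₁ r₂ ⊆ mu2 G s₁ s₂ := by
  rintro e ⟨he, x, y, rfl, hx, hy⟩
  exact ⟨he, x, y, rfl, h₁ hx, h₂ hy⟩

lemma wsum_mu_union_add_wsum_mu_inter_le (w : Sym2 V → ℝ) (hw : ∀ e, 0 ≤ w e) (r s : Set V) :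
    wsum w (mu G (r ∪ s)) + wsum w (mu G (r ∩ s)) ≤ wsum w (mu G r) + wsum w (mu G s) := by
  simp only [wsum_eq_sum_ite, ← Finset.sum_add_distrib]
  refine Finset.sum_le_sum fun e _ => ?_
  induction e using Sym2.ind with
  | _ x y =>
    simp only [mk_mem_mu_iff, Set.mem_union, Set.mem_inter_iff]
    by_cases hxy : G.Adj x y
    · by_cases x ∈ r <;> by_cases y ∈ r <;> by_cases x ∈ s <;> by_cases y ∈ s <;>
        simp_all
    · simp [hxy]

omit [Fintype V] in
lemma mem_exactly_one_of_partition {α β γ : Set V} (hU : α ∪ β ∪ γ = Set.univ)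
    (hαβ : Disjoint α β) (hβγ : Disjoint β γ) (hαγ : Disjoint α γ) (v : V) :
    (v ∈ α ∧ v ∉ β ∧ v ∉ γ) ∨ (v ∉ α ∧ v ∈ β ∧ v ∉ γ) ∨ (v ∉ α ∧ v ∉ β ∧ v ∈ γ) := by
  have hv : v ∈ α ∪ β ∪ γ := hU ▸ Set.mem_univ v
  have := hαβ.notMem_of_mem_left (a := v)
  have := hβγ.notMem_of_mem_left (a := v)
  have := hαγ.notMem_of_mem_left (a := v)
  simp only [Set.mem_union] at hv
  tauto

lemma wsum_mu_eq_wsum_mu2_add_wsum_mu2 {α β γ : Set V} (w : Sym2 V → ℝ) (hU : α ∪ β ∪ γ = Set.univ)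
    (hαβ : Disjoint α β) (hβγ : Disjoint β γ) (hαγ : Disjoint α γ) :
    wsum w (mu G γ) = wsum w (mu2 G β γ) + wsum w (mu2 G γ α) := by
  simp only [wsum_eq_sum_ite, ← Finset.sum_add_distrib]
  refine Finset.sum_congr rfl fun e _ => ?_
  induction e using Sym2.ind with
  | _ x y =>
    simp only [mk_mem_mu_iff, mk_mem_mu2_iff]
    rcases mem_exactly_one_of_partition hU hαβ hβγ hαγ x with hx | hx | hx <;>
      rcases mem_exactly_one_of_partition hU hαβ hβγ hαγ y with hy | hy | hy <;>
      simp [hx, hy]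

end CutSurface

section Triway

variable (G : SimpleGraph V) (w : Sym2 V → ℝ)

lemma minCut_le_wsum_mu {X Y r : Set V} (hr : IsCut X Y r) : minCut G w X Y ≤ wsum w (mu G r) :=
  csInf_le ((Set.finite_range fun r => wsum w (mu G r)).subset
    (by rintro _ ⟨r, -, rfl⟩; exact ⟨r, rfl⟩)).bddBelow ⟨r, hr, rfl⟩

lemma wsum_mu_union_le_of_minCut (hw : ∀ e, 0 ≤ w e) {X Y r γ : Set V} (hr : IsCut X Y r)
    (hmin : wsum w (mu G r) = minCut G w X Y) (hX : X ⊆ γ) :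
    wsum w (mu G (γ ∪ r)) ≤ wsum w (mu G γ) := by
  have hinter : IsCut X Y (γ ∩ r) :=
    ⟨Set.subset_inter hX hr.1, hr.2.trans (Set.compl_subset_compl.mpr Set.inter_subset_right)⟩
  have := minCut_le_wsum_mu G w hinter
  have := wsum_mu_union_add_wsum_mu_inter_le G w hw γ r
  linarith

omit [Fintype V] in
lemma isTriway_of_bdy {A B C : Set V} (h : Bdy A B C) : IsTriway A B C A B (A ∪ B)ᶜ := by
  obtain ⟨hAB, hAC, hBC⟩ := h
  refine ⟨Set.union_compl_self _, hAB, ?_, ?_, subset_rfl, subset_rfl, ?_⟩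
  · exact Set.disjoint_compl_right_iff_subset.mpr Set.subset_union_right
  · exact Set.disjoint_compl_right_iff_subset.mpr Set.subset_union_left
  · exact Set.subset_compl_iff_disjoint_right.mpr (hAC.symm.union_right hBC.symm)

omit [Fintype V] in
lemma IsTriway.absorb {A B C α β γ r : Set V} (h : IsTriway A B C α β γ) (hr : A ∪ B ⊆ rᶜ) :
    IsTriway A B C (α \ r) (β \ r) (γ ∪ r) := by
  obtain ⟨hU, hαβ, hβγ, hαγ, hA, hB, hC⟩ := h
  refine ⟨?_, hαβ.mono Set.sdiff_subset Set.sdiff_subset, ?_, ?_,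
    Set.subset_sdiff.mpr ⟨hA, ?_⟩, Set.subset_sdiff.mpr ⟨hB, ?_⟩, hC.trans Set.subset_union_left⟩
  · refine Set.eq_univ_of_forall fun v => ?_
    have hv : v ∈ α ∪ β ∪ γ := hU ▸ Set.mem_univ v
    by_cases v ∈ r <;> simp only [Set.mem_union, Set.mem_sdiff] at hv ⊢ <;> tauto
  · exact Disjoint.union_right (hβγ.mono_left Set.sdiff_subset) Set.disjoint_sdiff_left
  · exact Disjoint.union_right (hαγ.mono_left Set.sdiff_subset) Set.disjoint_sdiff_left
  · exact Set.subset_compl_iff_disjoint_right.mp (Set.subset_union_left.trans hr)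
  · exact Set.subset_compl_iff_disjoint_right.mp (Set.subset_union_right.trans hr)

lemma finite_setOf_triArea (A B C : Set V) (tAB tBC tCA : ℝ) :
    {a | ∃ α β γ : Set V, IsTriway A B C α β γ ∧ a = triArea G w tAB tBC tCA α β γ}.Finite :=
  (Set.finite_range fun p : Set V × Set V × Set V => triArea G w tAB tBC tCA p.1 p.2.1 p.2.2).subset
    (by rintro _ ⟨α, β, γ, -, rfl⟩; exact ⟨(α, β, γ), rfl⟩)

lemma triCut_le_triArea {A B C α β γ : Set V} (tAB tBC tCA : ℝ) (h : IsTriway A B C α β γ) :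
    triCut G w tAB tBC tCA A B C ≤ triArea G w tAB tBC tCA α β γ :=
  csInf_le (finite_setOf_triArea G w A B C tAB tBC tCA).bddBelow ⟨α, β, γ, h, rfl⟩

lemma exists_triArea_eq_triCut {A B C : Set V} (tAB tBC tCA : ℝ) (h : Bdy A B C) :
    ∃ α β γ : Set V, IsTriway A B C α β γ ∧
      triArea G w tAB tBC tCA α β γ = triCut G w tAB tBC tCA A B C := by
  have hne : {a | ∃ α β γ : Set V, IsTriway A B C α β γ ∧
      a = triArea G w tAB tBC tCA α β γ}.Nonempty := ⟨_, A, B, _, isTriway_of_bdy h, rfl⟩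
  obtain ⟨α, β, γ, hT, heq⟩ := hne.csInf_mem (finite_setOf_triArea G w A B C tAB tBC tCA)
  exact ⟨α, β, γ, hT, heq.symm⟩

lemma triArea_eq_of_partition {α β γ : Set V} (hU : α ∪ β ∪ γ = Set.univ)
    (hαβ : Disjoint α β) (hβγ : Disjoint β γ) (hαγ : Disjoint α γ) (tAB tC : ℝ) :
    triArea G w tAB tC tC α β γ = tAB * wsum w (mu2 G α β) + tC * wsum w (mu G γ) := by
  rw [triArea, wsum_mu_eq_wsum_mu2_add_wsum_mu2 G w hU hαβ hβγ hαγ]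
  ring

lemma triArea_absorb_le (hw : ∀ e, 0 ≤ w e) {tAB tC : ℝ} (htAB : 0 ≤ tAB) (htC : 0 ≤ tC)
    {A B C α β γ r : Set V} (h : IsTriway A B C α β γ) (hr : IsCut C (A ∪ B) r)
    (hmin : wsum w (mu G r) = minCut G w C (A ∪ B)) :
    triArea G w tAB tC tC (α \ r) (β \ r) (γ ∪ r) ≤ triArea G w tAB tC tC α β γ := by
  obtain ⟨hU', hαβ', hβγ', hαγ', -⟩ := h.absorb hr.2
  obtain ⟨hU, hαβ, hβγ, hαγ, -, -, hC⟩ := h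
  rw [triArea_eq_of_partition G w hU' hαβ' hβγ' hαγ', triArea_eq_of_partition G w hU hαβ hβγ hαγ]
  gcongr tAB * ?_ + tC * ?_
  · exact wsum_mono w hw (mu2_mono G Set.sdiff_subset Set.sdiff_subset)
  · exact wsum_mu_union_le_of_minCut G w hw hr hmin hC

end Triway

end RTN

/-- If `r_C` is a minimal cut for `C : A∪B` and the tensions satisfy
`t_{A:C} = t_{B:C} > 0`, `t_{A:B} > 0`, then there exists an optimal triway cut
`(α,β,γ)` for `(A,B,C)` with `r_C ⊆ γ`. -/
theorem minimal_cut_inside_triway_cut {V : Type*} [Fintype V] (G : SimpleGraph V)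
    (w : Sym2 V → ℝ) (hw : ∀ e, 0 ≤ w e) (A B C : Set V) (hbdy : RTN.Bdy A B C)
    (tAB tC : ℝ) (htAB : 0 < tAB) (htC : 0 < tC)
    (rC : Set V) (hcut : RTN.IsCut C (A ∪ B) rC)
    (hmin : RTN.wsum w (RTN.mu G rC) = RTN.minCut G w C (A ∪ B)) :
    ∃ α β γ : Set V, RTN.IsTriway A B C α β γ ∧ rC ⊆ γ ∧
      RTN.triArea G w tAB tC tC α β γ = RTN.triCut G w tAB tC tC A B C := by
  obtain ⟨α, β, γ, hT, hopt⟩ := RTN.exists_triArea_eq_triCut G w tAB tC tC hbdy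
  have hT' := hT.absorb hcut.2
  refine ⟨α \ rC, β \ rC, γ ∪ rC, hT', Set.subset_union_right, le_antisymm ?_ ?_⟩
  · exact hopt ▸ RTN.triArea_absorb_le G w hw htAB.le htC.le hT hcut hmin
  · exact RTN.triCut_le_triArea G w tAB tC tC hT'
end
end
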